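/- Fix p ∈ (0,1), s ∈ (0,1), ε ∈ (0, 1/2), c > 0 and δ > 0. There exists C > 0 such that for all sufficiently large r, with a = r^{p−1}, the following holds: if x ∈ ℝ^K satisfies x_k ≥ c·r^{s−1} for all k ∈ K and |Σ_{k∈K} k_i x_k − ρ_i| ≤ r^{−1/2+ε}/|I| for all i ∈ I, and if |χ_{k,k',i}(x)| ≥ δ for at least one pair of edges (k,i), (k',i) ∈ M, then Ξ(x) ≤ −C·r^{2(s−1)}/log r; in particular, for all sufficiently large r, Ξ(x) < −r^{2s−2−ε}. -/

import Mathlib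

open Finset

/-- The coordinates of `x` extended by the convention `x_0 = a`. -/
def xeDef {I : Type*} [Fintype I]
    (a : ℝ) (x : (I → ℕ) → ℝ) (m : I → ℕ) : ℝ :=
  if m = 0 then a else x m

/-- `x_{(i)} = a + ∑_{k ∈ K : k + e_i ∈ K} x_k`. -/
noncomputable def xIdxDef {I : Type*} [Fintype I] [DecidableEq I]
    (Kbar : Finset (I → ℕ)) (a : ℝ) (x : (I → ℕ) → ℝ) (i : I) : ℝ :=
  a + ∑ m ∈ (Kbar.erase 0).filter (fun m => m + Pi.single i 1 ∈ Kbar.erase 0), x m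

/-- `χ_{k,k',i}(x)`, with the convention `x_0 = a`. -/
noncomputable def chiDef {I : Type*} [Fintype I] [DecidableEq I]
    (a : ℝ) (x : (I → ℕ) → ℝ) (k k' : I → ℕ) (i : I) : ℝ :=
  Real.log ((k' i : ℝ) * xeDef a x (k - Pi.single i 1) * xeDef a x k')
    - Real.log ((k i : ℝ) * xeDef a x k * xeDef a x (k' - Pi.single i 1))

/-- `ξ_{k,k',i}(x) = (1/b)·χ_{k,k',i}(x)·k_i μ_i x_k x_{k'−e_i}/x_{(i)}`, `b = −log a`. -/
noncomputable def xiDef {I : Type*} [Fintype I] [DecidableEq I]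
    (Kbar : Finset (I → ℕ)) (μ : I → ℝ) (a : ℝ) (x : (I → ℕ) → ℝ)
    (k k' : I → ℕ) (i : I) : ℝ :=
  (1 / (-Real.log a)) * chiDef a x k k' i *
    ((k i : ℝ) * μ i * xeDef a x k * xeDef a x (k' - Pi.single i 1)) / xIdxDef Kbar a x i

/-- The set of configurations `k` such that `(k, i)` is an edge. -/
def edgesF {I : Type*} [Fintype I] [DecidableEq I]
    (Kbar : Finset (I → ℕ)) (i : I) : Finset (I → ℕ) :=
  (Kbar.erase 0).filter (fun k => 1 ≤ k i ∧ k - Pi.single i 1 ∈ Kbar)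

/-- `Ξ(x)` as the full double sum over ordered pairs of edges. -/
noncomputable def XiDef {I : Type*} [Fintype I] [DecidableEq I]
    (Kbar : Finset (I → ℕ)) (μ : I → ℝ) (a : ℝ) (x : (I → ℕ) → ℝ) : ℝ :=
  ∑ i : I, ∑ k ∈ edgesF Kbar i, ∑ k' ∈ edgesF Kbar i, xiDef Kbar μ a x k k' i

/-!
Pairing `ξ_{k,k',i}` with `ξ_{k',k,i}` gives `-(μ_i / (b x_{(i)})) (log B - log A)(B - A)` with
`A = k_i x_k x_{k'-e_i}` and `B = k'_i x_{k-e_i} x_{k'}`; since `log` is increasing every pair is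
`≤ 0`, so `Ξ` is at most half the contribution of the one pair with `|χ| = |log B - log A| ≥ δ`.
For that pair `(log B - log A)(B - A) ≥ δ (1 - e^{-δ}) max A B ≥ δ (1 - e^{-δ}) c² r^{2(s-1)}`,
because `k ≠ k'` forces one of `k - e_i`, `k' - e_i` into `K`. Finally `b = (1 - p) log r`, and
the near-conservation laws bound `x_{(i)} ≤ 1 + ∑_j (ρ_j + 1)`. The second claim holds because
`log r = o(r^ε)`.
-/

open Real Filter

namespace Finset

variable {ι α M : Type*} [AddCommMonoid M] [PartialOrder M] [IsOrderedAddMonoid M]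

theorem sum_le_single_of_nonpos {s : Finset ι} {f : ι → M} (hf : ∀ i ∈ s, f i ≤ 0) {a : ι}
    (ha : a ∈ s) : ∑ i ∈ s, f i ≤ f a :=
  single_le_sum (N := Mᵒᵈ) hf ha

theorem sum_sum_add_swap {R : Type*} [CommSemiring R] (s : Finset α) (f : α → α → R) :
    ∑ a ∈ s, ∑ b ∈ s, (f a b + f b a) = 2 * ∑ a ∈ s, ∑ b ∈ s, f a b := by
  simp only [sum_add_distrib]
  rw [sum_comm (f := fun a b => f b a)]
  ring

variable {R : Type*} [CommRing R] [LinearOrder R] [IsStrictOrderedRing R] {s : Finset α}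
  {f : α → α → R}

theorem sum_sum_nonpos_of_add_swap_nonpos (hf : ∀ a ∈ s, ∀ b ∈ s, f a b + f b a ≤ 0) :
    ∑ a ∈ s, ∑ b ∈ s, f a b ≤ 0 := by
  have := sum_nonpos fun a ha => sum_nonpos (hf a ha)
  linarith [sum_sum_add_swap s f]

theorem two_mul_sum_sum_le_add_swap (hf : ∀ a ∈ s, ∀ b ∈ s, f a b + f b a ≤ 0) {a₀ b₀ : α}
    (ha₀ : a₀ ∈ s) (hb₀ : b₀ ∈ s) :
    2 * ∑ a ∈ s, ∑ b ∈ s, f a b ≤ f a₀ b₀ + f b₀ a₀ := by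
  rw [← sum_sum_add_swap]
  exact (sum_le_single_of_nonpos (fun a ha => sum_nonpos (hf a ha)) ha₀).trans
    (sum_le_single_of_nonpos (hf a₀ ha₀) hb₀)

end Finset

open Finset

theorem log_sub_log_mul_sub_nonneg {A B : ℝ} (hA : 0 < A) (hB : 0 < B) :
    0 ≤ (log B - log A) * (B - A) := by
  rcases le_total A B with h | h
  · exact mul_nonneg (sub_nonneg.2 (log_le_log hA h)) (sub_nonneg.2 h)
  · exact mul_nonneg_of_nonpos_of_nonpos (sub_nonpos.2 (log_le_log hB h)) (sub_nonpos.2 h)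

/-- If `log B - log A ≥ δ ≥ 0` then `A ≤ e^{-δ} B`, so `B - A ≥ (1 - e^{-δ}) B`. -/
theorem mul_max_le_log_sub_log_mul_sub {A B δ : ℝ} (hA : 0 < A) (hB : 0 < B) (hδ : 0 ≤ δ)
    (h : δ ≤ |log B - log A|) :
    δ * (1 - exp (-δ)) * max A B ≤ (log B - log A) * (B - A) := by
  wlog hAB : A ≤ B generalizing A B
  · have := this hB hA (by rwa [abs_sub_comm]) (le_of_not_ge hAB)
    rw [max_comm]
    linarith
  have hlog : δ ≤ log B - log A := by
    rwa [abs_of_nonneg (sub_nonneg.2 (log_le_log hA hAB))] at h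
  have hAexp : A ≤ exp (-δ) * B :=
    calc A = exp (log A) := (exp_log hA).symm
      _ ≤ exp (-δ + log B) := exp_le_exp.2 (by linarith)
      _ = exp (-δ) * B := by rw [exp_add, exp_log hB]
  have hexp : 0 ≤ 1 - exp (-δ) := sub_nonneg.2 (exp_le_one_iff.2 (neg_nonpos.2 hδ))
  rw [max_eq_right hAB, mul_assoc]
  exact mul_le_mul hlog (by linarith) (mul_nonneg hexp hB.le) (hδ.trans hlog)

theorem eventually_neg_mul_rpow_div_log_lt {C ε : ℝ} (hC : 0 < C) (hε : 0 < ε) (γ : ℝ) :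
    ∀ᶠ r : ℝ in atTop, -C * r ^ γ / log r < -r ^ (γ - ε) := by
  filter_upwards [(isLittleO_log_rpow_atTop hε).tendsto_div_nhds_zero.eventually
    (gt_mem_nhds hC), eventually_gt_atTop 1] with r hlog hr
  have hr0 : 0 < r := by linarith
  rw [neg_mul, neg_div, neg_lt_neg_iff, rpow_sub hr0, lt_div_iff₀ (log_pos hr)]
  calc r ^ γ / r ^ ε * log r = r ^ γ * (log r / r ^ ε) := by ring
    _ < r ^ γ * C := mul_lt_mul_of_pos_left hlog (rpow_pos_of_pos hr0 γ)
    _ = C * r ^ γ := mul_comm _ _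

theorem eq_single_of_sub_single_eq_zero {I : Type*} [DecidableEq I] {k : I → ℕ} {i : I}
    (hki : 1 ≤ k i) (h : k - Pi.single i 1 = 0) : k = Pi.single i 1 := by
  refine le_antisymm (tsub_eq_zero_iff_le.1 h) fun j => ?_
  rcases eq_or_ne j i with rfl | hj <;> simp [*]

theorem sum_le_sum_sum_mul {I : Type*} [Fintype I] {S : Finset (I → ℕ)} (hS : (0 : I → ℕ) ∉ S)
    {x : (I → ℕ) → ℝ} (hx : ∀ m ∈ S, 0 ≤ x m) :
    ∑ m ∈ S, x m ≤ ∑ j, ∑ m ∈ S, (m j : ℝ) * x m := by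
  rw [sum_comm]
  refine sum_le_sum fun m hm => ?_
  rw [← sum_mul]
  obtain ⟨j, hj⟩ := Function.ne_iff.1 (ne_of_mem_of_not_mem hm hS)
  refine le_mul_of_one_le_left (hx m hm) ?_
  calc (1 : ℝ) ≤ m j := by exact_mod_cast Nat.one_le_iff_ne_zero.2 hj
    _ ≤ ∑ j, (m j : ℝ) := single_le_sum (fun j _ => Nat.cast_nonneg (m j)) (mem_univ j)

theorem xeDef_pos {I : Type*} [Fintype I] {Kbar : Finset (I → ℕ)} {a : ℝ}
    {x : (I → ℕ) → ℝ} (ha : 0 < a) (hx : ∀ k ∈ Kbar.erase 0, 0 < x k)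
    {m : I → ℕ} (hm : m ∈ Kbar) : 0 < xeDef a x m := by
  unfold xeDef
  split_ifs with h
  exacts [ha, hx m (mem_erase.2 ⟨h, hm⟩)]

section Model

variable {I : Type*} [Fintype I] [DecidableEq I] {Kbar : Finset (I → ℕ)} {μ : I → ℝ}
  {a q : ℝ} {x : (I → ℕ) → ℝ} {i : I} {k k' : I → ℕ}

noncomputable def edgeRate (a : ℝ) (x : (I → ℕ) → ℝ) (k k' : I → ℕ) (i : I) : ℝ :=
  (k i : ℝ) * xeDef a x k * xeDef a x (k' - Pi.single i 1)

theorem chiDef_eq_log_sub_log :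
    chiDef a x k k' i = log (edgeRate a x k' k i) - log (edgeRate a x k k' i) := by
  rw [chiDef, edgeRate, edgeRate, mul_right_comm (k' i : ℝ)]

theorem chiDef_self : chiDef a x k k i = 0 := by
  rw [chiDef_eq_log_sub_log, sub_self]

theorem xiDef_add_xiDef_swap :
    xiDef Kbar μ a x k k' i + xiDef Kbar μ a x k' k i =
      -(μ i / (-log a) / xIdxDef Kbar a x i *
        ((log (edgeRate a x k' k i) - log (edgeRate a x k k' i)) *
          (edgeRate a x k' k i - edgeRate a x k k' i))) := by
  rw [xiDef, xiDef, chiDef_eq_log_sub_log, chiDef_eq_log_sub_log, edgeRate, edgeRate]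
  ring

theorem edgeRate_pos (ha : 0 < a) (hx : ∀ k ∈ Kbar.erase 0, 0 < x k) (hk : k ∈ edgesF Kbar i)
    (hk' : k' ∈ edgesF Kbar i) : 0 < edgeRate a x k k' i := by
  obtain ⟨hkK, hki, -⟩ := mem_filter.1 hk
  obtain ⟨-, -, hk'K⟩ := mem_filter.1 hk'
  have hki' : (0 : ℝ) < k i := by exact_mod_cast hki
  exact mul_pos (mul_pos hki' (xeDef_pos ha hx (mem_of_mem_erase hkK))) (xeDef_pos ha hx hk'K)

theorem sq_le_edgeRate (hq : 0 ≤ q) (hx : ∀ k ∈ Kbar.erase 0, q ≤ x k)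
    (hk : k ∈ edgesF Kbar i) (hk' : k' ∈ edgesF Kbar i) (hk'i : k' ≠ Pi.single i 1) :
    q ^ 2 ≤ edgeRate a x k k' i := by
  obtain ⟨hkK, hki, -⟩ := mem_filter.1 hk
  obtain ⟨-, hk'i1, hk'K⟩ := mem_filter.1 hk'
  have hsub : k' - Pi.single i 1 ≠ 0 := fun h => hk'i (eq_single_of_sub_single_eq_zero hk'i1 h)
  have hxk : q ≤ xeDef a x k := by
    rw [xeDef, if_neg (ne_of_mem_erase hkK)]
    exact hx k hkK
  have hxk' : q ≤ xeDef a x (k' - Pi.single i 1) := by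
    rw [xeDef, if_neg hsub]
    exact hx _ (mem_erase.2 ⟨hsub, hk'K⟩)
  have hki' : (1 : ℝ) ≤ k i := by exact_mod_cast hki
  calc q ^ 2 = 1 * q * q := by ring
    _ ≤ edgeRate a x k k' i :=
      mul_le_mul (mul_le_mul hki' hxk hq (by linarith)) hxk' hq
        (mul_nonneg (by linarith) (hq.trans hxk))

theorem sq_le_max_edgeRate (hq : 0 ≤ q) (hx : ∀ k ∈ Kbar.erase 0, q ≤ x k)
    (hk : k ∈ edgesF Kbar i) (hk' : k' ∈ edgesF Kbar i) (hne : k ≠ k') :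
    q ^ 2 ≤ max (edgeRate a x k k' i) (edgeRate a x k' k i) := by
  by_cases h : k' = Pi.single i 1
  · exact le_max_of_le_right (sq_le_edgeRate hq hx hk' hk (h ▸ hne))
  · exact le_max_of_le_left (sq_le_edgeRate hq hx hk hk' h)

theorem xIdxDef_pos (ha : 0 < a) (hx : ∀ k ∈ Kbar.erase 0, 0 ≤ x k) : 0 < xIdxDef Kbar a x i :=
  add_pos_of_pos_of_nonneg ha (sum_nonneg fun m hm => hx m (mem_filter.1 hm).1)

theorem xIdxDef_le (ha : a ≤ 1) (hx : ∀ k ∈ Kbar.erase 0, 0 ≤ x k) :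
    xIdxDef Kbar a x i ≤ 1 + ∑ m ∈ Kbar.erase 0, x m :=
  add_le_add ha (sum_le_sum_of_subset_of_nonneg (filter_subset _ _) fun m hm _ => hx m hm)

theorem XiDef_le_of_abs_chiDef_ge {μ₀ X δ : ℝ} (ha0 : 0 < a) (ha1 : a < 1) (hq : 0 < q)
    (hx : ∀ k ∈ Kbar.erase 0, q ≤ x k) (hX : ∀ i, xIdxDef Kbar a x i ≤ X)
    (hμ₀ : 0 < μ₀) (hμ : ∀ i, μ₀ ≤ μ i) (hδ : 0 < δ) {i₀ : I} {k₀ k₀' : I → ℕ}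
    (hk₀ : k₀ ∈ edgesF Kbar i₀) (hk₀' : k₀' ∈ edgesF Kbar i₀)
    (hχ : δ ≤ |chiDef a x k₀ k₀' i₀|) :
    XiDef Kbar μ a x ≤ -(μ₀ / (-log a) / X * (δ * (1 - exp (-δ)) * q ^ 2)) / 2 := by
  have hb : 0 < -log a := neg_pos.2 (log_neg ha0 ha1)
  have hxpos : ∀ k ∈ Kbar.erase 0, 0 < x k := fun k hk => hq.trans_le (hx k hk)
  have hxIdx : ∀ i, 0 < xIdxDef Kbar a x i := fun i => xIdxDef_pos ha0 fun k hk => (hxpos k hk).le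
  have hweight : ∀ i, 0 ≤ μ i / (-log a) / xIdxDef Kbar a x i := fun i => by
    have := hμ₀.trans_le (hμ i)
    have := hxIdx i
    positivity
  have hpair : ∀ i, ∀ k ∈ edgesF Kbar i, ∀ k' ∈ edgesF Kbar i,
      xiDef Kbar μ a x k k' i + xiDef Kbar μ a x k' k i ≤ 0 := by
    intro i k hk k' hk'
    rw [xiDef_add_xiDef_swap, neg_nonpos]
    exact mul_nonneg (hweight i) (log_sub_log_mul_sub_nonneg (edgeRate_pos ha0 hxpos hk hk')
      (edgeRate_pos ha0 hxpos hk' hk))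
  have hne : k₀ ≠ k₀' := by
    rintro rfl
    rw [chiDef_self, abs_zero] at hχ
    linarith
  have hexp : 0 < 1 - exp (-δ) := sub_pos.2 (exp_lt_one_iff.2 (neg_neg_of_pos hδ))
  have hbad : xiDef Kbar μ a x k₀ k₀' i₀ + xiDef Kbar μ a x k₀' k₀ i₀ ≤
      -(μ₀ / (-log a) / X * (δ * (1 - exp (-δ)) * q ^ 2)) := by
    rw [xiDef_add_xiDef_swap, neg_le_neg_iff]
    refine mul_le_mul ?_ ?_ (by positivity) (hweight i₀)
    · have := hμ₀.trans_le (hμ i₀)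
      gcongr
      exacts [hxIdx i₀, hμ i₀, hX i₀]
    · calc δ * (1 - exp (-δ)) * q ^ 2
          ≤ δ * (1 - exp (-δ)) * max (edgeRate a x k₀ k₀' i₀) (edgeRate a x k₀' k₀ i₀) := by
            gcongr
            exact sq_le_max_edgeRate hq.le hx hk₀ hk₀' hne
        _ ≤ _ := mul_max_le_log_sub_log_mul_sub (edgeRate_pos ha0 hxpos hk₀ hk₀')
            (edgeRate_pos ha0 hxpos hk₀' hk₀) hδ.le (by rwa [← chiDef_eq_log_sub_log])
  calc XiDef Kbar μ a x
      ≤ ∑ k ∈ edgesF Kbar i₀, ∑ k' ∈ edgesF Kbar i₀, xiDef Kbar μ a x k k' i₀ :=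
        sum_le_single_of_nonpos (fun i _ => sum_sum_nonpos_of_add_swap_nonpos (hpair i))
          (mem_univ i₀)
    _ ≤ _ := by linarith [two_mul_sum_sum_le_add_swap (hpair i₀) hk₀ hk₀']

theorem XiDef_le_neg_rpow_div_log {ρ : I → ℝ} {μ₀ p s ε c δ r : ℝ} (hμ₀ : 0 < μ₀)
    (hμ : ∀ i, μ₀ ≤ μ i) (hp : p < 1) (hε : ε < 1 / 2) (hc : 0 < c) (hδ : 0 < δ) (hr : 1 < r)
    (hx : ∀ k ∈ Kbar.erase 0, c * r ^ (s - 1) ≤ x k)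
    (hcons : ∀ i : I, |∑ k ∈ Kbar.erase 0, (k i : ℝ) * x k - ρ i| ≤
      r ^ (-(1 : ℝ)/2 + ε) / (Fintype.card I : ℝ))
    {i₀ : I} {k₀ k₀' : I → ℕ} (hk₀ : k₀ ∈ edgesF Kbar i₀) (hk₀' : k₀' ∈ edgesF Kbar i₀)
    (hχ : δ ≤ |chiDef (r ^ (p - 1)) x k₀ k₀' i₀|) :
    XiDef Kbar μ (r ^ (p - 1)) x ≤
      -(μ₀ * δ * (1 - exp (-δ)) * c ^ 2 / (2 * (1 - p) * (1 + ∑ j, (ρ j + 1)))) *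
        r ^ (2 * (s - 1)) / log r := by
  have hr0 : 0 < r := by linarith
  have ha0 : 0 < r ^ (p - 1) := rpow_pos_of_pos hr0 _
  have ha1 : r ^ (p - 1) < 1 := rpow_lt_one_of_one_lt_of_neg hr (by linarith)
  have hq : 0 < c * r ^ (s - 1) := mul_pos hc (rpow_pos_of_pos hr0 _)
  have hxnn : ∀ k ∈ Kbar.erase 0, 0 ≤ x k := fun k hk => hq.le.trans (hx k hk)
  have herr : r ^ (-(1 : ℝ)/2 + ε) / (Fintype.card I : ℝ) ≤ 1 :=
    div_le_one_of_le₀ ((rpow_le_one_of_one_le_of_nonpos hr.le (by linarith)).trans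
      (by exact_mod_cast Fintype.card_pos_iff.2 ⟨i₀⟩)) (Nat.cast_nonneg _)
  have hmass : ∀ j, ∑ k ∈ Kbar.erase 0, (k j : ℝ) * x k ≤ ρ j + 1 := fun j => by
    linarith [(abs_le.1 ((hcons j).trans herr)).2]
  have hX : ∀ i, xIdxDef Kbar (r ^ (p - 1)) x i ≤ 1 + ∑ j, (ρ j + 1) := fun i =>
    (xIdxDef_le ha1.le hxnn).trans (add_le_add le_rfl ((sum_le_sum_sum_mul (notMem_erase 0 Kbar)
      hxnn).trans (sum_le_sum fun j _ => hmass j)))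
  have hXpos : 0 < 1 + ∑ j, (ρ j + 1) := (xIdxDef_pos ha0 hxnn (i := i₀)).trans_le (hX i₀)
  convert XiDef_le_of_abs_chiDef_ge ha0 ha1 hq hx hX hμ₀ hμ hδ hk₀ hk₀' hχ using 1
  have hlog : log r ≠ 0 := (log_pos hr).ne'
  have h1p : 1 - p ≠ 0 := (sub_pos.2 hp).ne'
  rw [log_rpow hr0, show -((p - 1) * log r) = (1 - p) * log r by ring, mul_pow,
    mul_comm 2 (s - 1), rpow_mul hr0.le, rpow_two]
  field_simp

end Model

theorem Xi_negative_drift_general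
    {I : Type*} [Fintype I] [DecidableEq I] [Nonempty I]
    (Kbar : Finset (I → ℕ))
    (ρ : I → ℝ) (hρ : ∀ i, 0 < ρ i)
    (μ : I → ℝ) (hμ : ∀ i, 0 < μ i)
    (p s ε c δ : ℝ) (hp : p ∈ Set.Ioo (0 : ℝ) 1)
    (hε : ε ∈ Set.Ioo (0 : ℝ) (1/2)) (hc : 0 < c) (hδ : 0 < δ) :
    ∃ C > (0 : ℝ),
      (∃ r₀ : ℝ, ∀ r : ℝ, r₀ ≤ r →
        ∀ x : (I → ℕ) → ℝ,
          (∀ k ∈ Kbar.erase 0, c * r ^ (s - 1) ≤ x k) →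
          (∀ i : I, |∑ k ∈ Kbar.erase 0, (k i : ℝ) * x k - ρ i| ≤
            r ^ (-(1 : ℝ)/2 + ε) / (Fintype.card I : ℝ)) →
          (∃ i : I, ∃ k ∈ edgesF Kbar i, ∃ k' ∈ edgesF Kbar i,
            δ ≤ |chiDef (r ^ (p - 1)) x k k' i|) →
          XiDef Kbar μ (r ^ (p - 1)) x ≤ -C * r ^ (2 * (s - 1)) / Real.log r) ∧
      (∃ r₁ : ℝ, ∀ r : ℝ, r₁ ≤ r →
        ∀ x : (I → ℕ) → ℝ,
          (∀ k ∈ Kbar.erase 0, c * r ^ (s - 1) ≤ x k) →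
          (∀ i : I, |∑ k ∈ Kbar.erase 0, (k i : ℝ) * x k - ρ i| ≤
            r ^ (-(1 : ℝ)/2 + ε) / (Fintype.card I : ℝ)) →
          (∃ i : I, ∃ k ∈ edgesF Kbar i, ∃ k' ∈ edgesF Kbar i,
            δ ≤ |chiDef (r ^ (p - 1)) x k k' i|) →
          XiDef Kbar μ (r ^ (p - 1)) x < -(r ^ (2 * s - 2 - ε))) := by
  set μ₀ := univ.inf' univ_nonempty μ
  have hμ₀ : 0 < μ₀ := (lt_inf'_iff _).2 fun i _ => hμ i
  have hμ₀le : ∀ i, μ₀ ≤ μ i := fun i => inf'_le μ (mem_univ i)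
  set C := μ₀ * δ * (1 - exp (-δ)) * c ^ 2 / (2 * (1 - p) * (1 + ∑ j, (ρ j + 1)))
  have hC : 0 < C := by
    have := sub_pos.2 (exp_lt_one_iff.2 (neg_neg_of_pos hδ))
    have := sub_pos.2 hp.2
    have : 0 < ∑ j, (ρ j + 1) := sum_pos (fun j _ => by linarith [hρ j]) univ_nonempty
    positivity
  obtain ⟨r₁, hr₁⟩ := eventually_atTop.1
    ((eventually_neg_mul_rpow_div_log_lt hC hε.1 (2 * (s - 1))).and (eventually_gt_atTop 1))
  refine ⟨C, hC, ⟨2, fun r hr x hx hcons ⟨i₀, k₀, hk₀, k₀', hk₀', hχ⟩ => ?_⟩,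
    ⟨r₁, fun r hr x hx hcons ⟨i₀, k₀, hk₀, k₀', hk₀', hχ⟩ => ?_⟩⟩
  · exact XiDef_le_neg_rpow_div_log hμ₀ hμ₀le hp.2 hε.2 hc hδ (by linarith) hx hcons hk₀ hk₀' hχ
  · obtain ⟨hdecay, hr1⟩ := hr₁ r hr
    calc XiDef Kbar μ (r ^ (p - 1)) x ≤ -C * r ^ (2 * (s - 1)) / log r :=
          XiDef_le_neg_rpow_div_log hμ₀ hμ₀le hp.2 hε.2 hc hδ hr1 hx hcons hk₀ hk₀' hχ
      _ < -(r ^ (2 * s - 2 - ε)) := by rwa [show 2 * s - 2 - ε = 2 * (s - 1) - ε by ring]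

/-- the negative-drift bound (eq-conc2) for `Ξ`: with `a = r^{p−1}`,
if `x_k ≥ c r^{s−1}` on `K`, `x` nearly satisfies the conservation laws, and `|χ| ≥ δ`
for at least one pair of edges, then `Ξ(x) ≤ −C r^{2(s−1)}/log r` for a constant `C > 0`
and all sufficiently large `r`; in particular `Ξ(x) < −r^{2s−2−ε}` for all sufficiently
large `r`. -/
theorem Xi_negative_drift
    {I : Type*} [Fintype I] [DecidableEq I] [Nonempty I]
    (Kbar : Finset (I → ℕ))
    (h0 : (0 : I → ℕ) ∈ Kbar)
    (hunit : ∀ i : I, Pi.single i 1 ∈ Kbar)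
    (hmono : ∀ k ∈ Kbar, ∀ k' : I → ℕ, (∀ i, k' i ≤ k i) → k' ∈ Kbar)
    (ρ : I → ℝ) (hρ : ∀ i, 0 < ρ i)
    (μ : I → ℝ) (hμ : ∀ i, 0 < μ i)
    (p s ε c δ : ℝ) (hp : p ∈ Set.Ioo (0 : ℝ) 1) (hs : s ∈ Set.Ioo (0 : ℝ) 1)
    (hε : ε ∈ Set.Ioo (0 : ℝ) (1/2)) (hc : 0 < c) (hδ : 0 < δ) :
    ∃ C > (0 : ℝ),
      (∃ r₀ : ℝ, ∀ r : ℝ, r₀ ≤ r →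
        ∀ x : (I → ℕ) → ℝ,
          (∀ k ∈ Kbar.erase 0, c * r ^ (s - 1) ≤ x k) →
          (∀ i : I, |∑ k ∈ Kbar.erase 0, (k i : ℝ) * x k - ρ i| ≤
            r ^ (-(1 : ℝ)/2 + ε) / (Fintype.card I : ℝ)) →
          (∃ i : I, ∃ k ∈ edgesF Kbar i, ∃ k' ∈ edgesF Kbar i,
            δ ≤ |chiDef (r ^ (p - 1)) x k k' i|) →
          XiDef Kbar μ (r ^ (p - 1)) x ≤ -C * r ^ (2 * (s - 1)) / Real.log r) ∧
      (∃ r₁ : ℝ, ∀ r : ℝ, r₁ ≤ r →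
        ∀ x : (I → ℕ) → ℝ,
          (∀ k ∈ Kbar.erase 0, c * r ^ (s - 1) ≤ x k) →
          (∀ i : I, |∑ k ∈ Kbar.erase 0, (k i : ℝ) * x k - ρ i| ≤
            r ^ (-(1 : ℝ)/2 + ε) / (Fintype.card I : ℝ)) →
          (∃ i : I, ∃ k ∈ edgesF Kbar i, ∃ k' ∈ edgesF Kbar i,
            δ ≤ |chiDef (r ^ (p - 1)) x k k' i|) →
          XiDef Kbar μ (r ^ (p - 1)) x < -(r ^ (2 * s - 2 - ε))) :=
  Xi_negative_drift_general Kbar ρ hρ μ hμ p s ε c δ hp hε hc hδ
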